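/- Let Ω ⊂ ℝ^N be bounded open, and let v ∈ X₀ˢ(Ω) with v⁺ ≢ 0 and v⁻ ≢ 0 satisfy λ₂∫_Ω(v⁺)² dx ≥ ⟨v, v⁺⟩ and λ₂∫_Ω(v⁻)² dx ≥ −⟨v, v⁻⟩, where λ₂ is the second eigenvalue of the fractional Dirichlet Laplacian on Ω and ⟨u,w⟩ = (c_{N,s}/2)∬_{ℝ^N×ℝ^N}(u(x)-u(y))(w(x)-w(y))/|x-y|^{N+2s} dxdy. Then v is an eigenfunction associated with λ₂, and both inequalities are equalities. -/

import Mathlib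

open MeasureTheory

/-- The normalization constant `c_{N,s}`. -/
noncomputable def cNs (N : ℕ) (s : ℝ) : ℝ :=
  s * 2 ^ (2 * s) * Real.Gamma ((N + 2 * s) / 2) /
    (Real.pi ^ ((N : ℝ) / 2) * Real.Gamma (1 - s))

/-- The fractional Dirichlet form `⟨u, w⟩`. -/
noncomputable def form (N : ℕ) (s : ℝ) (u w : EuclideanSpace ℝ (Fin N) → ℝ) : ℝ :=
  cNs N s / 2 *
    ∫ x, ∫ y, (u x - u y) * (w x - w y) / ‖x - y‖ ^ ((N : ℝ) + 2 * s)

/-- The Gagliardo seminorm (squared), as an extended-real integral. -/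
noncomputable def gag (N : ℕ) (s : ℝ) (u : EuclideanSpace ℝ (Fin N) → ℝ) : ENNReal :=
  ∫⁻ x, ∫⁻ y, ENNReal.ofReal ((u x - u y) ^ 2 / ‖x - y‖ ^ ((N : ℝ) + 2 * s))

/-- Membership in `X₀ˢ(Ω)`: an `Hˢ` function vanishing a.e. outside `Ω`. -/
def memX0 (N : ℕ) (s : ℝ) (Ω : Set (EuclideanSpace ℝ (Fin N)))
    (u : EuclideanSpace ℝ (Fin N) → ℝ) : Prop :=
  MemLp u 2 volume ∧ gag N s u < ⊤ ∧ ∀ᵐ x, x ∉ Ω → u x = 0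

/-!
Write `p = v⁺`, `m = v⁻`, `α = ∫_Ω φ₁ m > 0` and `β = ∫_Ω φ₁ p > 0`. The function `w = α p - β m`
satisfies `⟨w, φ₁⟩ = λ₁ (α β - β α) = 0`, so `λ₂ ∫ w² ≤ ⟨w, w⟩`. Since `p m = 0`,
`⟨w, w⟩ - λ₂ ∫ w² = -α² a - β² b - (α - β)² c`, where `a, b ≥ 0` are the slacks in the two
hypotheses and `c = -⟨p, m⟩ > 0` because `p, m ≥ 0` have disjoint supports. Hence `a = b = 0` and
`α = β`, i.e. `w = α v`: so `v ⊥ φ₁` minimizes the Rayleigh quotient on `{u : ⟨u, φ₁⟩ = 0}` and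
`⟨v, ξ⟩ = λ₂ ∫ v ξ` holds on that hyperplane. It also holds for `ξ = p`, which spans a complement
of the hyperplane unless `λ₁ = 0` (and then the hyperplane is everything).
-/

theorem integral_pos_of_not_ae_eq_zero {X : Type*} [MeasurableSpace X] {μ : Measure X}
    {f : X → ℝ} (hf : 0 ≤ᵐ[μ] f) (hfi : Integrable f μ) (hne : ¬ ∀ᵐ x ∂μ, f x = 0) :
    0 < ∫ x, f x ∂μ :=
  (integral_nonneg_of_ae hf).lt_of_ne fun h =>
    hne ((integral_eq_zero_iff_of_nonneg_ae hf hfi).1 h.symm)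

theorem setIntegral_mul_pos {X : Type*} [MeasurableSpace X] {μ : Measure X} {S : Set X}
    {φ f : X → ℝ} (hS : MeasurableSet S) (hφ : ∀ x ∈ S, 0 < φ x) (hf : ∀ x, 0 ≤ f x)
    (hfS : ∀ᵐ x ∂μ, x ∉ S → f x = 0) (hne : ¬ ∀ᵐ x ∂μ, f x = 0)
    (hint : IntegrableOn (fun x => φ x * f x) S μ) : 0 < ∫ x in S, φ x * f x ∂μ := by
  refine integral_pos_of_not_ae_eq_zero ?_ hint fun h => hne ?_
  · filter_upwards [ae_restrict_mem hS] with x hx using mul_nonneg (hφ x hx).le (hf x)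
  · filter_upwards [(ae_restrict_iff' hS).1 h, hfS] with x hin hout
    by_cases hx : x ∈ S
    · exact (mul_eq_zero.1 (hin hx)).resolve_left (hφ x hx).ne'
    · exact hout hx

theorem LinearMap.eq_zero_of_ker_le_ker {K E : Type*} [Field K] [AddCommGroup E] [Module K E]
    {f g : E →ₗ[K] K} (hfg : LinearMap.ker f ≤ LinearMap.ker g) {p : E} (hp : f p ≠ 0)
    (hgp : g p = 0) : g = 0 := by
  ext x
  have hx : x - (f x / f p) • p ∈ LinearMap.ker f := by
    simp [div_mul_cancel₀ _ hp]
  simpa [hgp] using hfg hx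

namespace LinearMap.BilinForm

variable {E : Type*} [AddCommGroup E] [Module ℝ E]

theorem apply_eq_zero_of_apply_self_eq_zero {C : LinearMap.BilinForm ℝ E} (hC : C.IsSymm)
    {V : Submodule ℝ E} (hV : ∀ u ∈ V, 0 ≤ C u u) {v w : E} (hv : v ∈ V) (hw : w ∈ V)
    (hvv : C v v = 0) : C v w = 0 := by
  have hquad (t : ℝ) : 0 ≤ C w w * (t * t) + 2 * C v w * t + 0 := by
    have := hV (v + t • w) (V.add_mem hv (V.smul_mem t hw))
    simp only [map_add, map_smul, LinearMap.add_apply, LinearMap.smul_apply, smul_eq_mul,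
      hC.eq w v, hvv] at this
    linarith
  have hdisc := discrim_le_zero hquad
  rw [discrim] at hdisc
  exact pow_eq_zero_iff two_ne_zero |>.mp <| le_antisymm (by nlinarith) (sq_nonneg _)

variable {B M : LinearMap.BilinForm ℝ E} {φ p m : E} {lam₁ lam₂ : ℝ}

/-- Proved by testing the Rayleigh bound on `M φ m • p - M φ p • m`, which is `B`-orthogonal
to `φ`. -/
theorem eq_of_rayleigh_le_of_sign_changing (hB : B.IsSymm) (hM : M.IsSymm)
    (hφ : ∀ u, B φ u = lam₁ * M φ u) (hray : ∀ u, B u φ = 0 → lam₂ * M u u ≤ B u u)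
    (hpm : M p m = 0) (hBpm : B p m < 0) (hφp : M φ p ≠ 0) (hφm : M φ m ≠ 0)
    (h1 : B (p - m) p ≤ lam₂ * M p p) (h2 : -B (p - m) m ≤ lam₂ * M m m) :
    M φ p = M φ m ∧ B (p - m) p = lam₂ * M p p ∧ -B (p - m) m = lam₂ * M m m := by
  set α := M φ m
  set β := M φ p
  have hw : B (α • p - β • m) φ = 0 := by
    rw [hB.eq, hφ]
    simp only [map_sub, map_smul, smul_eq_mul, α, β]
    ring
  have hQ := hray _ hw
  simp only [map_sub, map_smul, LinearMap.sub_apply, LinearMap.smul_apply, smul_eq_mul, hpm,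
    hM.eq m p, hB.eq m p] at hQ h1 h2
  have ha : 0 ≤ lam₂ * M p p - (B p p - B p m) := by linarith
  have hb : 0 ≤ lam₂ * M m m - (B m m - B p m) := by linarith
  have hA := mul_nonneg (sq_nonneg α) ha
  have hB' := mul_nonneg (sq_nonneg β) hb
  have hC := mul_nonneg (sq_nonneg (α - β)) (neg_nonneg.mpr hBpm.le)
  -- `hQ` says that the sum of the three nonnegative terms `hA`, `hB'`, `hC` is `≤ 0`
  have ha0 := mul_eq_zero.mp (by linarith : α ^ 2 * (lam₂ * M p p - (B p p - B p m)) = 0)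
  have hb0 := mul_eq_zero.mp (by linarith : β ^ 2 * (lam₂ * M m m - (B m m - B p m)) = 0)
  have hc0 := (mul_eq_zero.mp (by linarith : (α - β) ^ 2 * -B p m = 0)).resolve_right
    (by linarith)
  refine ⟨(sub_eq_zero.mp (pow_eq_zero_iff two_ne_zero |>.mp hc0)).symm, ?_, ?_⟩
  · simp only [map_sub, LinearMap.sub_apply, hB.eq m p]
    linarith [ha0.resolve_left (pow_ne_zero 2 hφm)]
  · simp only [map_sub, LinearMap.sub_apply]
    linarith [hb0.resolve_left (pow_ne_zero 2 hφp)]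

theorem apply_eq_of_rayleigh_le_of_sign_changing (hB : B.IsSymm) (hM : M.IsSymm)
    (hφ : ∀ u, B φ u = lam₁ * M φ u) (hray : ∀ u, B u φ = 0 → lam₂ * M u u ≤ B u u)
    (hpm : M p m = 0) (hBpm : B p m < 0) (hφp : M φ p ≠ 0) (hφm : M φ m ≠ 0)
    {v : E} (hv : p - m = v) (h1 : B v p ≤ lam₂ * M p p) (h2 : -B v m ≤ lam₂ * M m m) :
    (∀ u, B v u = lam₂ * M v u) ∧ B v p = lam₂ * M p p ∧ -B v m = lam₂ * M m m := by
  subst hv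
  obtain ⟨hαβ, hp, hm⟩ :=
    eq_of_rayleigh_le_of_sign_changing hB hM hφ hray hpm hBpm hφp hφm h1 h2
  refine ⟨?_, hp, hm⟩
  set C := B - lam₂ • M
  have hC : C.IsSymm := ⟨fun x y => by simp [C, hB.eq x, hM.eq x]⟩
  have hCv (u : E) : C (p - m) u = B (p - m) u - lam₂ * M (p - m) u := by simp [C]
  have hMmp : M m p = 0 := by rw [hM.eq, hpm]
  have hBvφ : B (p - m) φ = 0 := by
    rw [hB.eq, hφ, map_sub, hαβ, sub_self, mul_zero]
  simp only [map_sub, LinearMap.sub_apply, hB.eq m p] at hp hm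
  have hCvp : C (p - m) p = 0 := by
    rw [hCv]
    simp only [map_sub, LinearMap.sub_apply, hB.eq m p, hMmp]
    linarith
  have hCvv : C (p - m) (p - m) = 0 := by
    rw [hCv]
    simp only [map_sub, LinearMap.sub_apply, hB.eq m p, hMmp, hpm]
    linarith
  have hker : LinearMap.ker (B.flip φ) ≤ LinearMap.ker (C (p - m)) := fun w hw =>
    apply_eq_zero_of_apply_self_eq_zero hC
      (fun u hu => by simpa [hCv, C] using hray u (by simpa using hu))
      (by simpa using hBvφ) hw hCvv
  intro u
  suffices C (p - m) u = 0 by rw [hCv] at this; linarith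
  by_cases hfp : B p φ = 0
  · have hlam₁ : lam₁ = 0 := by
      rw [hB.eq, hφ] at hfp
      exact (mul_eq_zero.mp hfp).resolve_right hφp
    exact hker (by simp [hB.eq u, hφ, hlam₁])
  · rw [LinearMap.eq_zero_of_ker_le_ker hker (by simpa using hfp) hCvp, LinearMap.zero_apply]

end LinearMap.BilinForm

section FractionalDirichletForm

variable {N : ℕ} {s : ℝ} {Ω : Set (EuclideanSpace ℝ (Fin N))}

local notation "ℝᴺ" => EuclideanSpace ℝ (Fin N)

variable (N s) in
noncomputable def formDensity (u w : ℝᴺ → ℝ) (z : ℝᴺ × ℝᴺ) : ℝ :=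
  (u z.1 - u z.2) * (w z.1 - w z.2) / ‖z.1 - z.2‖ ^ ((N : ℝ) + 2 * s)

variable (N s) in
def GagliardoFinite (u : ℝᴺ → ℝ) : Prop :=
  AEStronglyMeasurable u volume ∧ gag N s u < ⊤

theorem formDensity_self_nonneg (u : ℝᴺ → ℝ) (z : ℝᴺ × ℝᴺ) : 0 ≤ formDensity N s u u z :=
  div_nonneg (mul_self_nonneg _) (Real.rpow_nonneg (norm_nonneg _) _)

theorem abs_formDensity_le (u w : ℝᴺ → ℝ) (z : ℝᴺ × ℝᴺ) :
    |formDensity N s u w z| ≤ (formDensity N s u u z + formDensity N s w w z) / 2 := by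
  have hk := Real.rpow_nonneg (norm_nonneg (z.1 - z.2)) ((N : ℝ) + 2 * s)
  simp only [formDensity]
  rw [abs_div, abs_of_nonneg hk, ← add_div, div_div, mul_comm _ (2 : ℝ), ← div_div]
  gcongr
  rw [abs_mul, le_div_iff₀ two_pos, ← abs_mul_abs_self, ← abs_mul_abs_self (w z.1 - w z.2)]
  nlinarith [two_mul_le_add_sq |u z.1 - u z.2| |w z.1 - w z.2|]

theorem MeasureTheory.AEStronglyMeasurable.formDensity {u w : ℝᴺ → ℝ}
    (hu : AEStronglyMeasurable u volume) (hw : AEStronglyMeasurable w volume) :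
    AEStronglyMeasurable (formDensity N s u w) volume :=
  (((hu.comp_fst.sub hu.comp_snd).mul (hw.comp_fst.sub hw.comp_snd)).aemeasurable.div
    ((measurable_fst.sub measurable_snd).norm.pow_const _).aemeasurable).aestronglyMeasurable

theorem gag_eq_lintegral {u : ℝᴺ → ℝ} (hu : AEStronglyMeasurable u volume) :
    gag N s u = ∫⁻ z, ENNReal.ofReal (formDensity N s u u z) := by
  rw [Measure.volume_eq_prod,
    lintegral_prod _ (hu.formDensity hu).aemeasurable.ennreal_ofReal]
  simp only [gag, formDensity, sq]

theorem GagliardoFinite.integrable_formDensity_self {u : ℝᴺ → ℝ} (hu : GagliardoFinite N s u) :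
    Integrable (formDensity N s u u) volume := by
  refine ⟨hu.1.formDensity hu.1, ?_⟩
  rw [hasFiniteIntegral_iff_ofReal (.of_forall (formDensity_self_nonneg u)),
    ← gag_eq_lintegral hu.1]
  exact hu.2

theorem GagliardoFinite.integrable_formDensity {u w : ℝᴺ → ℝ} (hu : GagliardoFinite N s u)
    (hw : GagliardoFinite N s w) : Integrable (formDensity N s u w) volume :=
  ((hu.integrable_formDensity_self.add hw.integrable_formDensity_self).div_const 2).mono'
    (hu.1.formDensity hw.1) (.of_forall (abs_formDensity_le u w))

theorem GagliardoFinite.of_sq_sub_le {u u' w : ℝᴺ → ℝ} {a b : ℝ} (hu : GagliardoFinite N s u)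
    (hu' : GagliardoFinite N s u') (hw : AEStronglyMeasurable w volume)
    (h : ∀ x y, (w x - w y) ^ 2 ≤ a * (u x - u y) ^ 2 + b * (u' x - u' y) ^ 2) :
    GagliardoFinite N s w := by
  refine ⟨hw, ?_⟩
  have hle (z : ℝᴺ × ℝᴺ) : ENNReal.ofReal (formDensity N s w w z) ≤
      ENNReal.ofReal a * ENNReal.ofReal (formDensity N s u u z) +
        ENNReal.ofReal b * ENNReal.ofReal (formDensity N s u' u' z) := by
    rw [← ENNReal.ofReal_mul' (formDensity_self_nonneg u z),
      ← ENNReal.ofReal_mul' (formDensity_self_nonneg u' z)]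
    refine (ENNReal.ofReal_le_ofReal ?_).trans ENNReal.ofReal_add_le
    simp only [formDensity, ← sq]
    rw [mul_div_assoc', mul_div_assoc', ← add_div]
    exact div_le_div_of_nonneg_right (h z.1 z.2) (Real.rpow_nonneg (norm_nonneg _) _)
  have hmeas {f : ℝᴺ → ℝ} (hf : GagliardoFinite N s f) :=
    (hf.1.formDensity hf.1 (s := s)).aemeasurable.ennreal_ofReal
  calc gag N s w ≤ ∫⁻ z, (ENNReal.ofReal a * ENNReal.ofReal (formDensity N s u u z) +
        ENNReal.ofReal b * ENNReal.ofReal (formDensity N s u' u' z)) := by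
        rw [gag_eq_lintegral hw]
        exact lintegral_mono hle
    _ = ENNReal.ofReal a * gag N s u + ENNReal.ofReal b * gag N s u' := by
        rw [lintegral_add_left' ((hmeas hu).const_mul _), lintegral_const_mul'' _ (hmeas hu),
          lintegral_const_mul'' _ (hmeas hu'), gag_eq_lintegral hu.1, gag_eq_lintegral hu'.1]
    _ < ⊤ := ENNReal.add_lt_top.mpr ⟨ENNReal.mul_lt_top ENNReal.ofReal_lt_top hu.2,
        ENNReal.mul_lt_top ENNReal.ofReal_lt_top hu'.2⟩

theorem GagliardoFinite.add {u w : ℝᴺ → ℝ} (hu : GagliardoFinite N s u)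
    (hw : GagliardoFinite N s w) : GagliardoFinite N s (u + w) :=
  hu.of_sq_sub_le (a := 2) (b := 2) hw (hu.1.add hw.1) fun x y => by
    simp only [Pi.add_apply]
    nlinarith [sq_nonneg (u x - u y - (w x - w y))]

theorem GagliardoFinite.const_smul {u : ℝᴺ → ℝ} (hu : GagliardoFinite N s u) (c : ℝ) :
    GagliardoFinite N s (c • u) :=
  hu.of_sq_sub_le (a := c ^ 2) (b := 0) hu (hu.1.const_smul c) fun x y => by
    simp only [Pi.smul_apply, smul_eq_mul]
    nlinarith

theorem GagliardoFinite.comp_lipschitzWith {u : ℝᴺ → ℝ} {F : ℝ → ℝ} (hu : GagliardoFinite N s u)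
    (hF : LipschitzWith 1 F) : GagliardoFinite N s (fun x => F (u x)) :=
  hu.of_sq_sub_le (a := 1) (b := 0) hu (hF.continuous.comp_aestronglyMeasurable hu.1)
    fun x y => by
      have := hF.dist_le_mul (u x) (u y)
      simp only [Real.dist_eq, NNReal.coe_one, one_mul] at this
      nlinarith [sq_abs (F (u x) - F (u y)), sq_abs (u x - u y), abs_nonneg (F (u x) - F (u y))]

theorem form_eq_integral {u w : ℝᴺ → ℝ} (hu : GagliardoFinite N s u)
    (hw : GagliardoFinite N s w) : form N s u w = cNs N s / 2 * ∫ z, formDensity N s u w z := by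
  rw [form, integral_integral (f := fun x y => (u x - u y) * (w x - w y) /
    ‖x - y‖ ^ ((N : ℝ) + 2 * s)) (hu.integrable_formDensity hw)]
  rfl

theorem form_comm (u w : ℝᴺ → ℝ) : form N s u w = form N s w u := by
  simp only [form, mul_comm (u _ - u _)]

theorem form_add_left {u w ξ : ℝᴺ → ℝ} (hu : GagliardoFinite N s u)
    (hw : GagliardoFinite N s w) (hξ : GagliardoFinite N s ξ) :
    form N s (u + w) ξ = form N s u ξ + form N s w ξ := by
  rw [form_eq_integral (hu.add hw) hξ, form_eq_integral hu hξ, form_eq_integral hw hξ, ← mul_add,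
    ← integral_add (hu.integrable_formDensity hξ) (hw.integrable_formDensity hξ)]
  congr 2 with z
  simp only [formDensity, Pi.add_apply]
  ring

theorem form_smul_left (c : ℝ) (u ξ : ℝᴺ → ℝ) : form N s (c • u) ξ = c * form N s u ξ := by
  simp only [form, Pi.smul_apply, smul_eq_mul, ← mul_sub, mul_assoc, mul_div_assoc,
    integral_const_mul]
  ring

theorem cNs_pos (hs : 0 < s) (hs1 : s < 1) : 0 < cNs N s := by
  have := Real.Gamma_pos_of_pos (by positivity : 0 < ((N : ℝ) + 2 * s) / 2)
  have := Real.Gamma_pos_of_pos (by linarith : 0 < 1 - s)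
  unfold cNs
  positivity

theorem form_self_nonneg (hc : 0 ≤ cNs N s) (u : ℝᴺ → ℝ) : 0 ≤ form N s u u :=
  mul_nonneg (by linarith) (integral_nonneg fun x => integral_nonneg fun y =>
    formDensity_self_nonneg u (x, y))

theorem memX0.gagliardoFinite {u : ℝᴺ → ℝ} (hu : memX0 N s Ω u) : GagliardoFinite N s u :=
  ⟨hu.1.aestronglyMeasurable, hu.2.1⟩

theorem memX0.comp_lipschitzWith {u : ℝᴺ → ℝ} {F : ℝ → ℝ} (hu : memX0 N s Ω u)
    (hF : LipschitzWith 1 F) (hF0 : F 0 = 0) : memX0 N s Ω (fun x => F (u x)) := by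
  refine ⟨hF.comp_memLp hF0 hu.1, (hu.gagliardoFinite.comp_lipschitzWith hF).2, ?_⟩
  filter_upwards [hu.2.2] with x hx hxΩ
  rw [hx hxΩ, hF0]

theorem memX0.integrable (hΩ : Bornology.IsBounded Ω) {u : ℝᴺ → ℝ} (hu : memX0 N s Ω u) :
    Integrable u volume := by
  have : IsFiniteMeasure (volume.restrict Ω) := isFiniteMeasure_restrict.mpr hΩ.measure_lt_top.ne
  exact IntegrableOn.integrable_of_ae_notMem_eq_zero ((hu.1.restrict Ω).integrable one_le_two)
    hu.2.2

variable (N s Ω) in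
def X0 : Submodule ℝ (ℝᴺ → ℝ) where
  carrier := {u | memX0 N s Ω u}
  add_mem' {u w} hu hw := ⟨hu.1.add hw.1, (hu.gagliardoFinite.add hw.gagliardoFinite).2, by
    filter_upwards [hu.2.2, hw.2.2] with x hux hwx hx
    simp [hux hx, hwx hx]⟩
  zero_mem' := ⟨MemLp.zero, by simp [gag], by simp⟩
  smul_mem' c u hu := ⟨hu.1.const_smul c, (hu.gagliardoFinite.const_smul c).2, by
    filter_upwards [hu.2.2] with x hux hx
    simp [hux hx]⟩

variable (N s Ω) in
noncomputable def dirichletForm : LinearMap.BilinForm ℝ (X0 N s Ω) :=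
  LinearMap.mk₂ ℝ (fun u w => form N s u w)
    (fun u w ξ => form_add_left u.2.gagliardoFinite w.2.gagliardoFinite ξ.2.gagliardoFinite)
    (fun c u ξ => form_smul_left c (u : ℝᴺ → ℝ) ξ)
    (fun ξ u w => by
      simp only [form_comm (ξ : ℝᴺ → ℝ)]
      exact form_add_left u.2.gagliardoFinite w.2.gagliardoFinite ξ.2.gagliardoFinite)
    (fun c ξ u => by
      simp only [form_comm (ξ : ℝᴺ → ℝ)]
      exact form_smul_left c (u : ℝᴺ → ℝ) ξ)

variable (N s Ω) in
noncomputable def l2InnerOn : LinearMap.BilinForm ℝ (X0 N s Ω) :=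
  LinearMap.mk₂ ℝ (fun u w => ∫ x in Ω, (u : ℝᴺ → ℝ) x * (w : ℝᴺ → ℝ) x)
    (fun u w ξ => by
      simp only [Submodule.coe_add, Pi.add_apply, add_mul]
      exact integral_add ((u.2.1.restrict Ω).integrable_mul (ξ.2.1.restrict Ω))
        ((w.2.1.restrict Ω).integrable_mul (ξ.2.1.restrict Ω)))
    (fun c u ξ => by
      simp only [Submodule.coe_smul, Pi.smul_apply, smul_eq_mul, mul_assoc, integral_const_mul])
    (fun ξ u w => by
      simp only [Submodule.coe_add, Pi.add_apply, mul_add]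
      exact integral_add ((ξ.2.1.restrict Ω).integrable_mul (u.2.1.restrict Ω))
        ((ξ.2.1.restrict Ω).integrable_mul (w.2.1.restrict Ω)))
    (fun c ξ u => by
      simp only [Submodule.coe_smul, Pi.smul_apply, smul_eq_mul, mul_left_comm _ c,
        integral_const_mul])

@[simp]
theorem dirichletForm_apply (u w : X0 N s Ω) :
    dirichletForm N s Ω u w = form N s (u : ℝᴺ → ℝ) w := rfl

@[simp]
theorem l2InnerOn_apply (u w : X0 N s Ω) :
    l2InnerOn N s Ω u w = ∫ x in Ω, (u : ℝᴺ → ℝ) x * (w : ℝᴺ → ℝ) x := rfl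

theorem dirichletForm_isSymm : (dirichletForm N s Ω).IsSymm :=
  ⟨fun u w => form_comm (u : ℝᴺ → ℝ) w⟩

theorem l2InnerOn_isSymm : (l2InnerOn N s Ω).IsSymm :=
  ⟨fun u w => by simp only [l2InnerOn_apply, mul_comm ((u : ℝᴺ → ℝ) _)]⟩

theorem l2InnerOn_self (u : X0 N s Ω) :
    l2InnerOn N s Ω u u = ∫ x in Ω, (u : ℝᴺ → ℝ) x ^ 2 := by
  simp only [l2InnerOn_apply, sq]

theorem sInf_mul_setIntegral_sq_le_form {φ u : ℝᴺ → ℝ} (hc : 0 ≤ cNs N s) (hu : memX0 N s Ω u)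
    (huφ : form N s u φ = 0) :
    sInf {t : ℝ | ∃ u, memX0 N s Ω u ∧ ¬ (∀ᵐ x, u x = 0) ∧
      form N s u φ = 0 ∧ t = form N s u u / ∫ x in Ω, (u x) ^ 2} * ∫ x in Ω, u x ^ 2 ≤
      form N s u u := by
  rcases (integral_nonneg fun x => sq_nonneg (u x) : 0 ≤ ∫ x in Ω, u x ^ 2).eq_or_lt with h0 | hpos
  · rw [← h0, mul_zero]
    exact form_self_nonneg hc u
  have hne : ¬ ∀ᵐ x, u x = 0 := fun h => hpos.ne' <| integral_eq_zero_of_ae <| by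
    filter_upwards [ae_restrict_of_ae h] with x hx
    simp [hx]
  rw [← le_div_iff₀ hpos]
  refine csInf_le ⟨0, ?_⟩ ⟨u, hu, hne, huφ, rfl⟩
  rintro t ⟨w, -, -, -, rfl⟩
  exact div_nonneg (form_self_nonneg hc w) (integral_nonneg fun x => sq_nonneg _)

/-- For `p, m ≥ 0` with `p m = 0` the integrand of `form N s p m` is
`-(p x m y + p y m x) / |x - y|^(N + 2s)`, and on the bounded set `Ω × Ω` the kernel is bounded
below, so the integral is at most `-(∫ p)(∫ m) / (2R)^(N + 2s)`. -/
theorem form_neg_of_mul_eq_zero (hs : 0 < s) (hc : 0 < cNs N s) (hΩ : Bornology.IsBounded Ω)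
    {p m : ℝᴺ → ℝ} (hp : memX0 N s Ω p) (hm : memX0 N s Ω m) (hp0 : ∀ x, 0 ≤ p x)
    (hm0 : ∀ x, 0 ≤ m x) (hpm : ∀ x, p x * m x = 0) (hpne : ¬ ∀ᵐ x, p x = 0)
    (hmne : ¬ ∀ᵐ x, m x = 0) : form N s p m < 0 := by
  obtain ⟨R, hR, hΩR⟩ := hΩ.subset_closedBall_lt 0 0
  set K := (2 * R) ^ ((N : ℝ) + 2 * s)
  set S : ℝᴺ × ℝᴺ → ℝ := fun z => (p z.1 * m z.2 + p z.2 * m z.1) / ‖z.1 - z.2‖ ^ ((N : ℝ) + 2 * s)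
  have hdens : formDensity N s p m = -S := by
    ext z
    simp only [formDensity, S, Pi.neg_apply, ← neg_div]
    congr 1
    linear_combination hpm z.1 + hpm z.2
  have hS : Integrable S volume := by
    simpa [hdens] using (hp.gagliardoFinite.integrable_formDensity hm.gagliardoFinite).neg
  have hL : Integrable (fun z : ℝᴺ × ℝᴺ => p z.1 * m z.2 / K) volume :=
    ((hp.integrable hΩ).mul_prod (hm.integrable hΩ)).div_const K
  have hLS : ∀ᵐ z : ℝᴺ × ℝᴺ, p z.1 * m z.2 / K ≤ S z := by
    filter_upwards [Measure.quasiMeasurePreserving_fst.ae hp.2.2,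
      Measure.quasiMeasurePreserving_snd.ae hm.2.2] with z hz1 hz2
    by_cases h0 : p z.1 * m z.2 = 0
    · rw [h0, zero_div]
      exact div_nonneg (add_nonneg (mul_nonneg (hp0 _) (hm0 _)) (mul_nonneg (hp0 _) (hm0 _)))
        (Real.rpow_nonneg (norm_nonneg _) _)
    have hx : z.1 ∈ Ω := by_contra fun hx => h0 (by rw [hz1 hx, zero_mul])
    have hy : z.2 ∈ Ω := by_contra fun hy => h0 (by rw [hz2 hy, mul_zero])
    have hxy : z.1 - z.2 ≠ 0 := fun h => h0 (by rw [sub_eq_zero.1 h, hpm])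
    have hk : 0 < ‖z.1 - z.2‖ ^ ((N : ℝ) + 2 * s) := Real.rpow_pos_of_pos (norm_pos_iff.2 hxy) _
    have hdist : ‖z.1 - z.2‖ ≤ 2 * R := by
      rw [← dist_eq_norm]
      linarith [dist_triangle_right z.1 z.2 0, Metric.mem_closedBall.1 (hΩR hx),
        Metric.mem_closedBall.1 (hΩR hy)]
    calc p z.1 * m z.2 / K ≤ p z.1 * m z.2 / ‖z.1 - z.2‖ ^ ((N : ℝ) + 2 * s) :=
          div_le_div_of_nonneg_left (mul_nonneg (hp0 _) (hm0 _)) hk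
            (Real.rpow_le_rpow (norm_nonneg _) hdist (by positivity))
      _ ≤ S z := div_le_div_of_nonneg_right
          (le_add_of_nonneg_right (mul_nonneg (hp0 _) (hm0 _))) hk.le
  have hIp := integral_pos_of_not_ae_eq_zero (.of_forall hp0) (hp.integrable hΩ) hpne
  have hIm := integral_pos_of_not_ae_eq_zero (.of_forall hm0) (hm.integrable hΩ) hmne
  have hIS : 0 < ∫ z, S z :=
    calc (0 : ℝ) < (∫ x, p x) * (∫ x, m x) / K := by positivity
      _ = ∫ z : ℝᴺ × ℝᴺ, p z.1 * m z.2 / K := by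
        rw [integral_div, Measure.volume_eq_prod, integral_prod_mul]
      _ ≤ ∫ z, S z := integral_mono_ae hL hS hLS
  rw [form_eq_integral hp.gagliardoFinite hm.gagliardoFinite, hdens]
  simp only [Pi.neg_apply, integral_neg]
  nlinarith

end FractionalDirichletForm

theorem second_eigenfunction_criterion_general {N : ℕ} (s : ℝ)
    (hs : s ∈ Set.Ioo (0 : ℝ) 1) (Ω : Set (EuclideanSpace ℝ (Fin N)))
    (hΩo : IsOpen Ω) (hΩb : Bornology.IsBounded Ω)
    (φ₁ : EuclideanSpace ℝ (Fin N) → ℝ) (lam1 lam2 : ℝ)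
    (hφ₁X : memX0 N s Ω φ₁) (hφ₁pos : ∀ x ∈ Ω, 0 < φ₁ x)
    (hφ₁eig : ∀ ξ, memX0 N s Ω ξ → form N s φ₁ ξ = lam1 * ∫ x in Ω, φ₁ x * ξ x)
    (hlam2 : lam2 = sInf {t : ℝ | ∃ u, memX0 N s Ω u ∧ ¬ (∀ᵐ x, u x = 0) ∧
      form N s u φ₁ = 0 ∧ t = form N s u u / ∫ x in Ω, (u x) ^ 2})
    (v : EuclideanSpace ℝ (Fin N) → ℝ) (hvX : memX0 N s Ω v)
    (hvp : ¬ (∀ᵐ x, max (v x) 0 = 0)) (hvm : ¬ (∀ᵐ x, max (-(v x)) 0 = 0))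
    (h1 : form N s v (fun x => max (v x) 0) ≤ lam2 * ∫ x in Ω, (max (v x) 0) ^ 2)
    (h2 : -form N s v (fun x => max (-(v x)) 0) ≤ lam2 * ∫ x in Ω, (max (-(v x)) 0) ^ 2) :
    (∀ ξ, memX0 N s Ω ξ → form N s v ξ = lam2 * ∫ x in Ω, v x * ξ x) ∧
    form N s v (fun x => max (v x) 0) = lam2 * ∫ x in Ω, (max (v x) 0) ^ 2 ∧
    -form N s v (fun x => max (-(v x)) 0) = lam2 * ∫ x in Ω, (max (-(v x)) 0) ^ 2 := by
  have hc := cNs_pos (N := N) hs.1 hs.2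
  let φ : X0 N s Ω := ⟨φ₁, hφ₁X⟩
  let p : X0 N s Ω := ⟨fun x => max (v x) 0,
    hvX.comp_lipschitzWith (F := fun t => max t 0) (LipschitzWith.id.max_const 0) (max_self 0)⟩
  let m : X0 N s Ω := ⟨fun x => max (-v x) 0,
    hvX.comp_lipschitzWith (F := fun t => max (-t) 0) (LipschitzWith.id.neg.max_const 0)
      (by simp)⟩
  have hpm (x) : max (v x) 0 * max (-v x) 0 = 0 := by
    rcases le_total (v x) 0 with h | h <;> simp [h]
  have hφ_pos (u : X0 N s Ω) (hu0 : ∀ x, 0 ≤ (u : EuclideanSpace ℝ (Fin N) → ℝ) x)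
      (hu : ¬ ∀ᵐ x, (u : EuclideanSpace ℝ (Fin N) → ℝ) x = 0) : 0 < l2InnerOn N s Ω φ u :=
    setIntegral_mul_pos hΩo.measurableSet hφ₁pos hu0 u.2.2.2 hu
      ((hφ₁X.1.restrict Ω).integrable_mul (u.2.1.restrict Ω))
  obtain ⟨heig, hp, hm⟩ := LinearMap.BilinForm.apply_eq_of_rayleigh_le_of_sign_changing
    dirichletForm_isSymm l2InnerOn_isSymm (φ := φ) (lam₁ := lam1) (lam₂ := lam2)
    (fun u => hφ₁eig u u.2)
    (fun u hu => by rw [l2InnerOn_self, hlam2]; exact sInf_mul_setIntegral_sq_le_form hc.le u.2 hu)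
    (by simp [p, m, hpm])
    (form_neg_of_mul_eq_zero hs.1 hc hΩb p.2 m.2 (fun x => le_max_right _ _)
      (fun x => le_max_right _ _) hpm hvp hvm)
    (hφ_pos p (fun x => le_max_right _ _) hvp).ne'
    (hφ_pos m (fun x => le_max_right _ _) hvm).ne'
    (v := ⟨v, hvX⟩) (Subtype.ext (funext fun x => max_zero_sub_max_neg_zero_eq_self (v x)))
    (by rwa [l2InnerOn_self]) (by rwa [l2InnerOn_self])
  rw [l2InnerOn_self] at hp hm
  exact ⟨fun ξ hξ => heig ⟨ξ, hξ⟩, hp, hm⟩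

theorem second_eigenfunction_criterion {N : ℕ} (hN : 2 ≤ N) (s : ℝ)
    (hs : s ∈ Set.Ioo (0 : ℝ) 1) (Ω : Set (EuclideanSpace ℝ (Fin N)))
    (hΩo : IsOpen Ω) (hΩb : Bornology.IsBounded Ω)
    (φ₁ : EuclideanSpace ℝ (Fin N) → ℝ) (lam1 lam2 : ℝ)
    (hφ₁X : memX0 N s Ω φ₁) (hφ₁pos : ∀ x ∈ Ω, 0 < φ₁ x)
    (hφ₁eig : ∀ ξ, memX0 N s Ω ξ → form N s φ₁ ξ = lam1 * ∫ x in Ω, φ₁ x * ξ x)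
    (hlam2 : lam2 = sInf {t : ℝ | ∃ u, memX0 N s Ω u ∧ ¬ (∀ᵐ x, u x = 0) ∧
      form N s u φ₁ = 0 ∧ t = form N s u u / ∫ x in Ω, (u x) ^ 2})
    (v : EuclideanSpace ℝ (Fin N) → ℝ) (hvX : memX0 N s Ω v)
    (hvp : ¬ (∀ᵐ x, max (v x) 0 = 0)) (hvm : ¬ (∀ᵐ x, max (-(v x)) 0 = 0))
    (h1 : form N s v (fun x => max (v x) 0) ≤ lam2 * ∫ x in Ω, (max (v x) 0) ^ 2)
    (h2 : -form N s v (fun x => max (-(v x)) 0) ≤ lam2 * ∫ x in Ω, (max (-(v x)) 0) ^ 2) :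
    (∀ ξ, memX0 N s Ω ξ → form N s v ξ = lam2 * ∫ x in Ω, v x * ξ x) ∧
    form N s v (fun x => max (v x) 0) = lam2 * ∫ x in Ω, (max (v x) 0) ^ 2 ∧
    -form N s v (fun x => max (-(v x)) 0) = lam2 * ∫ x in Ω, (max (-(v x)) 0) ^ 2 :=
  second_eigenfunction_criterion_general s hs Ω hΩo hΩb φ₁ lam1 lam2 hφ₁X hφ₁pos hφ₁eig hlam2 v hvX
    hvp hvm h1 h2
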